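/- arXiv:0803.2065 — 8 statements merged into one kernel-verified Lean document; each statement's English description precedes it below -/
import Mathlib

section
/- If A is a d×n integer matrix of rank d whose columns generate Z^d as a lattice, c ∈ R^n, and for some cell σ of the regular subdivision Δ_c the columns A_σ form a Hilbert basis (i.e. every integer point of cone(A_σ) is a nonnegative integer combination of columns of A_σ), then for every integer vector b in cone(A_σ) the linear program min{c·x : Ax = b, x ≥ 0} has an integer optimal solution. -/
/-- Feasibility for the LP min {c·x : Ax = b, x ≥ 0}. -/
def feas {d n : ℕ} (A : Matrix (Fin d) (Fin n) ℤ) (b : Fin d → ℝ) (x : Fin n → ℝ) : Prop :=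
  (∀ j, 0 ≤ x j) ∧ ∀ i, ∑ j, (A i j : ℝ) * x j = b i

/-- σ is a cell of the regular subdivision Δ_c. -/
def isCell {d n : ℕ} (A : Matrix (Fin d) (Fin n) ℤ) (c : Fin n → ℝ) (σ : Finset (Fin n)) : Prop :=
  ∃ z : Fin d → ℝ, (∀ j ∈ σ, ∑ i, z i * (A i j : ℝ) = c j) ∧
    ∀ j ∉ σ, ∑ i, z i * (A i j : ℝ) < c j

theorem stmt0 {d n : ℕ} (A : Matrix (Fin d) (Fin n) ℤ) (c : Fin n → ℝ)
    (hrank : A.rank = d)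
    (hlat : ∀ v : Fin d → ℤ, ∃ u : Fin n → ℤ, ∀ i, ∑ j, A i j * u j = v i)
    (σ : Finset (Fin n)) (hσ : isCell A c σ)
    (hHil : ∀ b : Fin d → ℤ,
      (∃ x : Fin n → ℝ, (∀ j, 0 ≤ x j) ∧ (∀ j ∉ σ, x j = 0) ∧
        ∀ i, ∑ j, (A i j : ℝ) * x j = (b i : ℝ)) →
      ∃ u : Fin n → ℕ, (∀ j ∉ σ, u j = 0) ∧ ∀ i, ∑ j, A i j * (u j : ℤ) = b i) :
    ∀ b : Fin d → ℤ,
      (∃ x : Fin n → ℝ, (∀ j, 0 ≤ x j) ∧ (∀ j ∉ σ, x j = 0) ∧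
        ∀ i, ∑ j, (A i j : ℝ) * x j = (b i : ℝ)) →
      ∃ u : Fin n → ℕ, feas A (fun i => (b i : ℝ)) (fun j => (u j : ℝ)) ∧
        ∀ y, feas A (fun i => (b i : ℝ)) y →
          ∑ j, c j * (u j : ℝ) ≤ ∑ j, c j * y j := by
  obtain ⟨z, hz1, hz2⟩ := hσ
  intro b hb
  obtain ⟨u, hu0, huA⟩ := hHil b hb
  have hfeas : feas A (fun i => (b i : ℝ)) (fun j => (u j : ℝ)) := by
    refine ⟨fun j => by positivity, fun i => ?_⟩
    have := huA i
    push_cast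
    exact_mod_cast this
  refine ⟨u, hfeas, fun y hy => ?_⟩
  have key : ∀ x : Fin n → ℝ, feas A (fun i => (b i : ℝ)) x →
      ∑ j, (∑ i, z i * (A i j : ℝ)) * x j = ∑ i, z i * (b i : ℝ) := by
    intro x hx
    calc ∑ j, (∑ i, z i * (A i j : ℝ)) * x j
        = ∑ j, ∑ i, z i * ((A i j : ℝ) * x j) := by
          simp [Finset.sum_mul, mul_assoc]
      _ = ∑ i, z i * ∑ j, (A i j : ℝ) * x j := by
          rw [Finset.sum_comm]; simp [Finset.mul_sum]
      _ = ∑ i, z i * (b i : ℝ) := by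
          exact Finset.sum_congr rfl fun i _ => by rw [hx.2 i]
  have hcu : ∑ j, c j * (u j : ℝ) = ∑ i, z i * (b i : ℝ) := by
    rw [← key _ hfeas]
    refine Finset.sum_congr rfl fun j _ => ?_
    by_cases hj : j ∈ σ
    · rw [hz1 j hj]
    · simp [hu0 j hj]
  have hcy : ∑ i, z i * (b i : ℝ) ≤ ∑ j, c j * y j := by
    rw [← key _ hy]
    refine Finset.sum_le_sum fun j _ => ?_
    by_cases hj : j ∈ σ
    · rw [hz1 j hj]
    · exact mul_le_mul_of_nonneg_right (hz2 j hj).le (hy.1 j)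
  linarith
end

section
/- Suppose the system yA ≤ c is totally dual integral, i.e. for every integer vector b ∈ cone(A) ∩ Z^d the linear program min{c·x : Ax = b, x ≥ 0} has an integer optimal solution. Then for every cell σ of the regular subdivision Δ_c, the set of columns A_σ is a Hilbert basis: every integer vector in cone(A_σ) is a nonnegative integer combination of the columns of A_σ. -/
/-- TDI implies every cell of the regular subdivision indexes a Hilbert basis. -/
theorem stmt1 {d n : ℕ} (A : Matrix (Fin d) (Fin n) ℤ) (c : Fin n → ℝ)
    (hrank : A.rank = d)
    (hlat : ∀ v : Fin d → ℤ, ∃ u : Fin n → ℤ, ∀ i, ∑ j, A i j * u j = v i)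
    (hQ : ∃ y : Fin d → ℝ, ∀ j, ∑ i, y i * (A i j : ℝ) ≤ c j)
    (hTDI : ∀ b : Fin d → ℤ, (∃ x, feas A (fun i => (b i : ℝ)) x) →
      ∃ u : Fin n → ℕ, feas A (fun i => (b i : ℝ)) (fun j => (u j : ℝ)) ∧
        ∀ y, feas A (fun i => (b i : ℝ)) y →
          ∑ j, c j * (u j : ℝ) ≤ ∑ j, c j * y j) :
    ∀ σ : Finset (Fin n), isCell A c σ →
      ∀ b : Fin d → ℤ,
        (∃ x : Fin n → ℝ, (∀ j, 0 ≤ x j) ∧ (∀ j ∉ σ, x j = 0) ∧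
          ∀ i, ∑ j, (A i j : ℝ) * x j = (b i : ℝ)) →
        ∃ u : Fin n → ℕ, (∀ j ∉ σ, u j = 0) ∧ ∀ i, ∑ j, A i j * (u j : ℤ) = b i := by
  rintro σ ⟨z, hz1, hz2⟩ b ⟨x, hx0, hxs, hxA⟩
  obtain ⟨u, ⟨hu0, huA⟩, hopt⟩ := hTDI b ⟨x, hx0, hxA⟩
  have key : ∀ y : Fin n → ℝ, (∀ i, ∑ j, (A i j : ℝ) * y j = (b i : ℝ)) →
      ∑ j, (c j - ∑ i, z i * (A i j : ℝ)) * y j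
        = ∑ j, c j * y j - ∑ i, z i * (b i : ℝ) := by
    intro y hy
    have h1 : ∑ j, (∑ i, z i * (A i j : ℝ)) * y j = ∑ i, z i * (b i : ℝ) := by
      calc ∑ j, (∑ i, z i * (A i j : ℝ)) * y j
          = ∑ j, ∑ i, z i * ((A i j : ℝ) * y j) := by
            refine Finset.sum_congr rfl fun j _ => ?_
            rw [Finset.sum_mul]; exact Finset.sum_congr rfl fun i _ => (mul_assoc _ _ _)
        _ = ∑ i, ∑ j, z i * ((A i j : ℝ) * y j) := Finset.sum_comm
        _ = ∑ i, z i * (b i : ℝ) := by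
            refine Finset.sum_congr rfl fun i _ => ?_
            rw [← Finset.mul_sum, hy i]
    simp only [sub_mul, Finset.sum_sub_distrib, h1]
  have hxkey := key x hxA
  have hxzero : ∑ j, (c j - ∑ i, z i * (A i j : ℝ)) * x j = 0 := by
    refine Finset.sum_eq_zero fun j _ => ?_
    by_cases hj : j ∈ σ
    · rw [hz1 j hj]; ring
    · rw [hxs j hj]; ring
  have hcx : ∑ j, c j * x j = ∑ i, z i * (b i : ℝ) := by linarith [hxkey, hxzero]
  have hukey := key (fun j => (u j : ℝ)) huA
  have hle : ∑ j, c j * ((u j : ℕ) : ℝ) ≤ ∑ j, c j * x j := hopt x ⟨hx0, hxA⟩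
  have hsumle : ∑ j, (c j - ∑ i, z i * (A i j : ℝ)) * ((u j : ℕ) : ℝ) ≤ 0 := by
    rw [hukey]; linarith
  have hnonneg : ∀ j ∈ Finset.univ, 0 ≤ (c j - ∑ i, z i * (A i j : ℝ)) * ((u j : ℕ) : ℝ) := by
    intro j _
    apply mul_nonneg _ (Nat.cast_nonneg _)
    by_cases hj : j ∈ σ
    · rw [hz1 j hj]; simp
    · linarith [hz2 j hj]
  have hsumzero : ∑ j, (c j - ∑ i, z i * (A i j : ℝ)) * ((u j : ℕ) : ℝ) = 0 :=
    le_antisymm hsumle (Finset.sum_nonneg hnonneg)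
  have hterm := (Finset.sum_eq_zero_iff_of_nonneg hnonneg).mp hsumzero
  have husupp : ∀ j ∉ σ, u j = 0 := by
    intro j hj
    have h := hterm j (Finset.mem_univ j)
    have hpos : 0 < c j - ∑ i, z i * (A i j : ℝ) := by linarith [hz2 j hj]
    have : ((u j : ℕ) : ℝ) = 0 := by
      rcases mul_eq_zero.mp h with h' | h'
      · linarith
      · exact h'
    exact_mod_cast this
  refine ⟨u, husupp, fun i => ?_⟩
  have h := huA i
  simp only at h
  have h2 : ((∑ j, A i j * (u j : ℤ) : ℤ) : ℝ) = ((b i : ℤ) : ℝ) := by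
    push_cast
    convert h using 2
  exact_mod_cast h2
end

section
/- Let A ∈ Z^{d×n}, c ∈ R^n with Q_c = {y : yA ≤ c} nonempty, and suppose A is a Hilbert basis. If there exists a finite test-set T for the family of integer programs IP_{A,c} such that every t ∈ T has all positive entries equal to 1 (i.e. t^+ is a 0-1 vector), then yA ≤ c is TDI: for every b ∈ cone(A) ∩ Z^d the optimal values of the linear program min{c·x : Ax = b, x ≥ 0} and the integer program min{c·x : Ax = b, x ∈ N^n} coincide. -/
/-- u is a feasible but non-optimal solution of the integer program IP_{A,c}(Au). -/
def intNonOpt {d n : ℕ} (A : Matrix (Fin d) (Fin n) ℤ) (c : Fin n → ℝ) (u : Fin n → ℕ) : Prop :=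
  ∃ u' : Fin n → ℕ, (∀ i, ∑ j, A i j * (u' j : ℤ) = ∑ j, A i j * (u j : ℤ)) ∧
    ∑ j, c j * (u' j : ℝ) < ∑ j, c j * (u j : ℝ)

/-!
An integer optimum `u` for `b` is also optimal for the linear program. Replace an LP-feasible `x`
by a basic feasible solution `x'` of no larger cost; its support indexes linearly independent
columns of `A`, so `x'` is rational and `N • x'` is an integer point for `N • b` for some `N > 0`.
Now `N • u` is an integer optimum for `N • b`: a test vector `t ≤ N • u` has `t ≤ u`, because its
positive entries are `1`, and `u - t` would improve `u`. Hence `N (c ⬝ᵥ u) ≤ N (c ⬝ᵥ x')`.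
An integer optimum exists because `b` is an integer combination of the columns (Hilbert basis),
integer costs are bounded below by LP duality (`Q_c ≠ ∅`), and every improvement by a test vector
lowers the cost by at least the least cost of a test vector.
-/

open Matrix

theorem exists_mulVec_eq_zero_of_not_linearIndepOn {R : Type*} [CommRing R]
    {m n : Type*} [Fintype n] {M : Matrix m n R} {s : Set n}
    (h : ¬LinearIndepOn R (fun j ↦ Mᵀ j) s) :
    ∃ v : n → R, v ≠ 0 ∧ M *ᵥ v = 0 ∧ v.support ⊆ s := by
  classical
  rw [linearIndepOn_iff''] at h
  push Not at h
  obtain ⟨t, g, hts, hgt, hsum, i, -, hgi⟩ := h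
  refine ⟨g, fun hg ↦ hgi (congrFun hg i), ?_, fun j hj ↦ hts ?_⟩
  · rw [mulVec_eq_sum, ← Finset.sum_subset (Finset.subset_univ t) fun j _ hj ↦ by simp [hgt j hj]]
    simpa only [op_smul_eq_smul] using hsum
  · by_contra hjt
    exact hj (hgt j hjt)

section LinearProgram

variable {K : Type*} [Field K] [LinearOrder K] [IsStrictOrderedRing K]
  {m n : Type*} [Fintype n] {M : Matrix m n K} {c : n → K} {y : m → K} {x : n → K}

theorem exists_support_ssubset_of_neg (hx : 0 ≤ x) {v : n → K} (hv : M *ᵥ v = 0)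
    (hvx : v.support ⊆ x.support) (hcv : c ⬝ᵥ v ≤ 0) {j₁ : n} (hj₁ : v j₁ < 0) :
    ∃ x', 0 ≤ x' ∧ M *ᵥ x' = M *ᵥ x ∧ c ⬝ᵥ x' ≤ c ⬝ᵥ x ∧ x'.support ⊂ x.support := by
  classical
  obtain ⟨j₀, hj₀, hmin⟩ := (Finset.univ.filter fun j ↦ v j < 0).exists_min_image
    (fun j ↦ x j / -v j) ⟨j₁, by simpa using hj₁⟩
  simp only [Finset.mem_filter, Finset.mem_univ, true_and] at hj₀ hmin
  set τ := x j₀ / -v j₀ with hτ_def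
  have hτ : 0 ≤ τ := div_nonneg (hx j₀) (neg_nonneg.2 hj₀.le)
  have hx'j₀ : x j₀ + τ * v j₀ = 0 := by
    rw [hτ_def, div_neg, neg_mul, div_mul_cancel₀ _ hj₀.ne]; ring
  refine ⟨x + τ • v, fun j ↦ ?_, by rw [mulVec_add, mulVec_smul, hv, smul_zero, add_zero], ?_, ?_⟩
  · simp only [Pi.zero_apply, Pi.add_apply, Pi.smul_apply, smul_eq_mul]
    rcases le_or_gt 0 (v j) with h | h
    · exact add_nonneg (hx j) (mul_nonneg hτ h)
    · have := (le_div_iff₀ (neg_pos.2 h)).1 (hmin j h)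
      linarith
  · rw [dotProduct_add, dotProduct_smul, smul_eq_mul]
    linarith [mul_nonpos_of_nonneg_of_nonpos hτ hcv]
  · refine (Set.ssubset_iff_of_subset fun j hj ↦ ?_).2 ⟨j₀, hvx hj₀.ne, ?_⟩
    · by_contra hxj
      have hvj : v j = 0 := Function.notMem_support.1 fun h ↦ hxj (hvx h)
      simp_all
    · simpa using hx'j₀

variable [Fintype m]

theorem dotProduct_mulVec_le_of_vecMul_le (hy : y ᵥ* M ≤ c) (hx : 0 ≤ x) :
    y ⬝ᵥ (M *ᵥ x) ≤ c ⬝ᵥ x := by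
  rw [dotProduct_mulVec]
  exact Finset.sum_le_sum fun j _ ↦ mul_le_mul_of_nonneg_right (hy j) (hx j)

theorem exists_descent_direction (hy : y ᵥ* M ≤ c) {v : n → K} (hv0 : v ≠ 0)
    (hv : M *ᵥ v = 0) : ∃ w, (w = v ∨ w = -v) ∧ c ⬝ᵥ w ≤ 0 ∧ ∃ j, w j < 0 := by
  wlog hcv : c ⬝ᵥ v ≤ 0 generalizing v
  · obtain ⟨w, hw, hcw, hneg⟩ := this (neg_ne_zero.2 hv0) (by rw [mulVec_neg, hv, neg_zero])
      (by rw [dotProduct_neg]; linarith)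
    exact ⟨w, by rwa [neg_neg, or_comm] at hw, hcw, hneg⟩
  by_cases hneg : ∃ j, v j < 0
  · exact ⟨v, Or.inl rfl, hcv, hneg⟩
  push Not at hneg
  have hcv0 : c ⬝ᵥ v = 0 := by
    have := dotProduct_mulVec_le_of_vecMul_le hy (x := v) (fun j ↦ hneg j)
    rw [hv, dotProduct_zero] at this
    exact le_antisymm hcv this
  obtain ⟨j, hj⟩ := Function.ne_iff.1 hv0
  exact ⟨-v, Or.inr rfl, by rw [dotProduct_neg, hcv0, neg_zero],
    j, neg_neg_iff_pos.2 ((hneg j).lt_of_ne' hj)⟩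

theorem exists_support_ssubset (hy : y ᵥ* M ≤ c) (hx : 0 ≤ x) {v : n → K} (hv0 : v ≠ 0)
    (hv : M *ᵥ v = 0) (hvx : v.support ⊆ x.support) :
    ∃ x', 0 ≤ x' ∧ M *ᵥ x' = M *ᵥ x ∧ c ⬝ᵥ x' ≤ c ⬝ᵥ x ∧ x'.support ⊂ x.support := by
  obtain ⟨w, hw, hcw, j, hj⟩ := exists_descent_direction hy hv0 hv
  rcases hw with rfl | rfl
  · exact exists_support_ssubset_of_neg hx hv hvx hcw hj
  · exact exists_support_ssubset_of_neg hx (by rw [mulVec_neg, hv, neg_zero])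
      (by rwa [Function.support_neg]) hcw hj

theorem exists_linearIndepOn_support (hy : y ᵥ* M ≤ c) (hx : 0 ≤ x) :
    ∃ x', 0 ≤ x' ∧ M *ᵥ x' = M *ᵥ x ∧ c ⬝ᵥ x' ≤ c ⬝ᵥ x ∧
      LinearIndepOn K (fun j ↦ Mᵀ j) x'.support := by
  induction hk : x.support.ncard using Nat.strong_induction_on generalizing x with
  | _ k ih =>
  by_cases hli : LinearIndepOn K (fun j ↦ Mᵀ j) x.support
  · exact ⟨x, hx, rfl, le_rfl, hli⟩
  obtain ⟨v, hv0, hv, hvx⟩ := exists_mulVec_eq_zero_of_not_linearIndepOn hli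
  obtain ⟨x₁, hx₁, hMx₁, hcx₁, hss⟩ := exists_support_ssubset hy hx hv0 hv hvx
  obtain ⟨x', hx', hMx', hcx', hli'⟩ :=
    ih _ (hk ▸ Set.ncard_lt_ncard hss (Set.toFinite _)) hx₁ rfl
  exact ⟨x', hx', hMx'.trans hMx₁, hcx'.trans hcx₁, hli'⟩

end LinearProgram

theorem exists_eq_algebraMap_comp_of_linearIndepOn {K L : Type*} [Field K] [Field L] [Algebra K L]
    {m n : Type*} [Fintype m] [Fintype n] {M : Matrix m n K} {b : m → K} {x : n → L}
    (hx : M.map (algebraMap K L) *ᵥ x = algebraMap K L ∘ b)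
    (hli : LinearIndepOn L (fun j ↦ (M.map (algebraMap K L))ᵀ j) x.support) :
    ∃ q : n → K, x = algebraMap K L ∘ q := by
  classical
  have hliK : LinearIndependent K (fun j : x.support ↦ Mᵀ j) :=
    linearIndependent_algebraMap_comp_iff.1 hli
  -- otherwise the columns together with `b` would be independent over `K`, hence over `L`
  have hb : b ∈ Submodule.span K (Set.range fun j : x.support ↦ Mᵀ j) := by
    by_contra hb
    have hliL := linearIndependent_algebraMap_comp_iff (S := L).2 (hliK.option hb)
    refine (linearIndependent_option.1 hliL).2 ?_
    change algebraMap K L ∘ b ∈ _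
    rw [← hx, mulVec_eq_sum]
    refine Submodule.sum_mem _ fun j _ ↦ ?_
    by_cases hj : x j = 0
    · simp [hj]
    · rw [op_smul_eq_smul]
      exact Submodule.smul_mem _ _ (Submodule.subset_span ⟨⟨j, hj⟩, rfl⟩)
  obtain ⟨g, hg⟩ := (Submodule.mem_span_range_iff_exists_fun K).1 hb
  have hgx : ∀ j : x.support, algebraMap K L (g j) = x j := by
    refine Fintype.linearIndependent_iffₛ.1 hli _ _ ?_
    trans algebraMap K L ∘ b
    · rw [← hg]
      ext i
      simp [Finset.sum_apply, Algebra.smul_def]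
    · rw [← hx, mulVec_eq_sum]
      beta_reduce
      rw [Finset.sum_set_coe (f := fun j ↦ x j • (M.map (algebraMap K L))ᵀ j)]
      simp only [op_smul_eq_smul]
      exact (Finset.sum_subset (Finset.subset_univ _) fun j _ hj ↦ by simp_all).symm
  refine ⟨fun j ↦ if hj : x j = 0 then 0 else g ⟨j, hj⟩, funext fun j ↦ ?_⟩
  by_cases hj : x j = 0
  · simp [hj]
  · simp [hj, hgx ⟨j, hj⟩]

theorem exists_pos_nat_mul_eq_natCast {n : Type*} [Fintype n] {q : n → ℚ} (hq : 0 ≤ q) :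
    ∃ N : ℕ, 0 < N ∧ ∃ u : n → ℕ, ∀ j, (u j : ℚ) = N * q j := by
  refine ⟨∏ j, (q j).den, Finset.prod_pos fun j _ ↦ (q j).den_pos, ?_⟩
  choose k hk using fun j ↦ Finset.dvd_prod_of_mem (fun j ↦ (q j).den) (Finset.mem_univ j)
  refine ⟨fun j ↦ k j * (q j).num.toNat, fun j ↦ ?_⟩
  have hnum : ((q j).num.toNat : ℚ) = (q j).num := by
    exact_mod_cast Int.toNat_of_nonneg (Rat.num_nonneg.2 (hq j))
  push_cast [hk j, hnum]
  rw [← Rat.mul_den_eq_num]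
  ring

theorem map_intCast_mulVec_natCast {m n : Type*} [Fintype n] (A : Matrix m n ℤ) (u : n → ℕ) :
    A.map (↑) *ᵥ (fun j ↦ (u j : ℝ)) = fun i ↦ ((A *ᵥ fun j ↦ (u j : ℤ)) i : ℝ) := by
  ext i
  rw [← eq_intCast (Int.castRingHom ℝ), RingHom.map_mulVec]
  simp [Function.comp_def]

theorem exists_pos_nat_mulVec_eq_nsmul {m n : Type*} [Fintype m] [Fintype n]
    {A : Matrix m n ℤ} {b : m → ℤ} {c : n → ℝ} {y : m → ℝ} (hy : y ᵥ* A.map (↑) ≤ c)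
    {x : n → ℝ} (hx : 0 ≤ x) (hAx : A.map (↑) *ᵥ x = fun i ↦ (b i : ℝ)) :
    ∃ N : ℕ, 0 < N ∧ ∃ u : n → ℕ,
      A *ᵥ (fun j ↦ (u j : ℤ)) = N • b ∧ c ⬝ᵥ (fun j ↦ (u j : ℝ)) ≤ N * c ⬝ᵥ x := by
  obtain ⟨x', hx', hAx', hcx', hli⟩ := exists_linearIndepOn_support hy hx
  have hmap : (A.map (Int.cast : ℤ → ℚ)).map (algebraMap ℚ ℝ) = A.map (↑) := by ext; simp
  obtain ⟨q, rfl⟩ := exists_eq_algebraMap_comp_of_linearIndepOn (b := fun i ↦ (b i : ℚ))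
    (by rw [hmap, hAx', hAx]; ext; simp) (by rwa [hmap])
  obtain ⟨N, hN, u, hu⟩ := exists_pos_nat_mul_eq_natCast fun j ↦ by simpa using hx' j
  have hux : (fun j ↦ (u j : ℝ)) = (N : ℝ) • (algebraMap ℚ ℝ ∘ q) := by
    ext j
    rw [← Rat.cast_natCast, hu j]
    simp
  refine ⟨N, hN, u, funext fun i ↦ ?_, ?_⟩
  · have := congrFun (map_intCast_mulVec_natCast A u) i
    rw [hux, mulVec_smul, hAx', hAx] at this
    simp only [Pi.smul_apply, nsmul_eq_mul, smul_eq_mul] at this ⊢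
    exact_mod_cast this.symm
  · rw [hux, dotProduct_smul, smul_eq_mul]
    exact mul_le_mul_of_nonneg_left hcx' (Nat.cast_nonneg N)

section IntegerProgram

variable {d n : ℕ} {A : Matrix (Fin d) (Fin n) ℤ} {c : Fin n → ℝ} {T : Finset (Fin n → ℤ)}

theorem intNonOpt_iff {u : Fin n → ℕ} :
    intNonOpt A c u ↔ ∃ u' : Fin n → ℕ, A *ᵥ (fun j ↦ (u' j : ℤ)) = A *ᵥ (fun j ↦ (u j : ℤ)) ∧
      c ⬝ᵥ (fun j ↦ (u' j : ℝ)) < c ⬝ᵥ (fun j ↦ (u j : ℝ)) := by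
  simp only [intNonOpt, funext_iff]
  rfl

theorem dotProduct_natCast_le_of_not_intNonOpt {u u' : Fin n → ℕ} (hu : ¬intNonOpt A c u)
    (hAu' : A *ᵥ (fun j ↦ (u' j : ℤ)) = A *ᵥ (fun j ↦ (u j : ℤ))) :
    c ⬝ᵥ (fun j ↦ (u j : ℝ)) ≤ c ⬝ᵥ (fun j ↦ (u' j : ℝ)) :=
  not_lt.1 fun h ↦ hu (intNonOpt_iff.2 ⟨u', hAu', h⟩)

theorem exists_natCast_sub {u : Fin n → ℕ} {t : Fin n → ℤ} (ht : A *ᵥ t = 0)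
    (htu : ∀ j, t j ≤ u j) :
    ∃ u' : Fin n → ℕ, A *ᵥ (fun j ↦ (u' j : ℤ)) = A *ᵥ (fun j ↦ (u j : ℤ)) ∧
      c ⬝ᵥ (fun j ↦ (u' j : ℝ)) = c ⬝ᵥ (fun j ↦ (u j : ℝ)) - c ⬝ᵥ (fun j ↦ (t j : ℝ)) := by
  have hu' : ∀ j, (((u j - t j).toNat : ℕ) : ℤ) = u j - t j :=
    fun j ↦ Int.toNat_of_nonneg (sub_nonneg.2 (htu j))
  refine ⟨fun j ↦ (u j - t j).toNat, ?_, ?_⟩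
  · simp only [hu']
    rw [← Pi.sub_def, mulVec_sub, ht, sub_zero]
  · have hu'ℝ : ∀ j, (((u j - t j).toNat : ℕ) : ℝ) = u j - t j := fun j ↦ by
      exact_mod_cast hu' j
    simp only [hu'ℝ]
    rw [← Pi.sub_def, dotProduct_sub]

theorem not_intNonOpt_nsmul
    (hT : ∀ t ∈ T, A *ᵥ t = 0 ∧ 0 < c ⬝ᵥ (fun j ↦ (t j : ℝ)) ∧ ∀ j, t j ≤ 1)
    (hTest : ∀ u : Fin n → ℕ, intNonOpt A c u → ∃ t ∈ T, ∀ j, t j ≤ (u j : ℤ))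
    {u : Fin n → ℕ} (hu : ¬intNonOpt A c u) (N : ℕ) : ¬intNonOpt A c (N • u) := by
  intro hNu
  obtain ⟨t, htT, htNu⟩ := hTest _ hNu
  obtain ⟨ht, hct, ht1⟩ := hT t htT
  have htu : ∀ j, t j ≤ u j := fun j ↦ by
    have := htNu j
    simp only [Pi.smul_apply, smul_eq_mul, Nat.cast_mul] at this
    rcases Nat.eq_zero_or_pos (u j) with h | h
    · simp_all
    · exact (ht1 j).trans (by exact_mod_cast h)
  obtain ⟨u', hAu', hcu'⟩ := exists_natCast_sub (c := c) ht htu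
  exact hu (intNonOpt_iff.2 ⟨u', hAu', by linarith⟩)

theorem exists_not_intNonOpt {y : Fin d → ℝ} (hy : y ᵥ* A.map (↑) ≤ c)
    (hT : ∀ t ∈ T, A *ᵥ t = 0 ∧ 0 < c ⬝ᵥ (fun j ↦ (t j : ℝ)))
    (hTest : ∀ u : Fin n → ℕ, intNonOpt A c u → ∃ t ∈ T, ∀ j, t j ≤ (u j : ℤ))
    (u₀ : Fin n → ℕ) :
    ∃ u : Fin n → ℕ, A *ᵥ (fun j ↦ (u j : ℤ)) = A *ᵥ (fun j ↦ (u₀ j : ℤ)) ∧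
      ¬intNonOpt A c u := by
  obtain ⟨δ, hδ, hδT⟩ : ∃ δ > 0, ∀ t ∈ T, δ ≤ c ⬝ᵥ (fun j ↦ (t j : ℝ)) := by
    rcases T.eq_empty_or_nonempty with rfl | hTne
    · exact ⟨1, one_pos, by simp⟩
    · exact ⟨_, (Finset.lt_inf'_iff hTne).2 fun t ht ↦ (hT t ht).2,
        fun t ht ↦ Finset.inf'_le _ ht⟩
  set S := {v : ℝ | ∃ u : Fin n → ℕ, A *ᵥ (fun j ↦ (u j : ℤ)) = A *ᵥ (fun j ↦ (u₀ j : ℤ)) ∧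
    v = c ⬝ᵥ (fun j ↦ (u j : ℝ))}
  have hS : BddBelow S := by
    refine ⟨y ⬝ᵥ fun i ↦ ((A *ᵥ fun j ↦ (u₀ j : ℤ)) i : ℝ), ?_⟩
    rintro _ ⟨u, hAu, rfl⟩
    rw [← hAu, ← map_intCast_mulVec_natCast]
    exact dotProduct_mulVec_le_of_vecMul_le hy fun j ↦ Nat.cast_nonneg _
  -- a near-minimiser cannot be improved by a test vector, whose cost is at least `δ`
  obtain ⟨_, ⟨u, hAu, rfl⟩, hlt⟩ := Real.lt_sInf_add_pos (s := S) ⟨_, u₀, rfl, rfl⟩ hδ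
  refine ⟨u, hAu, fun hu ↦ ?_⟩
  obtain ⟨t, htT, htu⟩ := hTest u hu
  obtain ⟨u', hAu', hcu'⟩ := exists_natCast_sub (c := c) (hT t htT).1 htu
  have := csInf_le hS ⟨u', hAu'.trans hAu, rfl⟩
  linarith [hδT t htT]

theorem dotProduct_natCast_le_of_not_intNonOpt_real {y : Fin d → ℝ} (hy : y ᵥ* A.map (↑) ≤ c)
    (hT : ∀ t ∈ T, A *ᵥ t = 0 ∧ 0 < c ⬝ᵥ (fun j ↦ (t j : ℝ)) ∧ ∀ j, t j ≤ 1)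
    (hTest : ∀ u : Fin n → ℕ, intNonOpt A c u → ∃ t ∈ T, ∀ j, t j ≤ (u j : ℤ))
    {u : Fin n → ℕ} (hu : ¬intNonOpt A c u) {x : Fin n → ℝ} (hx : 0 ≤ x)
    (hAx : A.map (↑) *ᵥ x = A.map (↑) *ᵥ (fun j ↦ (u j : ℝ))) :
    c ⬝ᵥ (fun j ↦ (u j : ℝ)) ≤ c ⬝ᵥ x := by
  rw [map_intCast_mulVec_natCast] at hAx
  obtain ⟨N, hN, u', hAu', hcu'⟩ := exists_pos_nat_mulVec_eq_nsmul hy hx hAx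
  have hNuℤ : (fun j ↦ ((N • u) j : ℤ)) = N • fun j ↦ (u j : ℤ) := by ext; simp
  have hNuℝ : (fun j ↦ ((N • u) j : ℝ)) = (N : ℝ) • fun j ↦ (u j : ℝ) := by ext; simp
  have hNu := dotProduct_natCast_le_of_not_intNonOpt (not_intNonOpt_nsmul hT hTest hu N)
    (by rw [hAu', hNuℤ, mulVec_smul])
  rw [hNuℝ, dotProduct_smul, smul_eq_mul] at hNu
  exact le_of_mul_le_mul_left (hNu.trans hcu') (Nat.cast_pos.2 hN)

end IntegerProgram

theorem stmt2 {d n : ℕ} (A : Matrix (Fin d) (Fin n) ℤ) (c : Fin n → ℝ)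
    (hQ : ∃ y : Fin d → ℝ, ∀ j, ∑ i, y i * (A i j : ℝ) ≤ c j)
    -- A is a Hilbert basis
    (hHilb : ∀ b : Fin d → ℤ, (∃ x, feas A (fun i => (b i : ℝ)) x) →
      ∃ u : Fin n → ℕ, ∀ i, ∑ j, A i j * (u j : ℤ) = b i)
    -- a finite test-set whose elements have all positive entries equal to 1
    (T : Finset (Fin n → ℤ))
    (hT : ∀ t ∈ T, (∀ i, ∑ j, A i j * t j = 0) ∧ (0 < ∑ j, c j * (t j : ℝ)) ∧ ∀ j, t j ≤ 1)
    (hTest : ∀ u : Fin n → ℕ, intNonOpt A c u → ∃ t ∈ T, ∀ j, t j ≤ (u j : ℤ)) :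
    -- TDI: for every integer b in cone(A) the LP and IP optimal values coincide
    ∀ b : Fin d → ℤ, (∃ x, feas A (fun i => (b i : ℝ)) x) →
      sInf {v : ℝ | ∃ x, feas A (fun i => (b i : ℝ)) x ∧ v = ∑ j, c j * x j} =
      sInf {v : ℝ | ∃ u : Fin n → ℕ, (∀ i, ∑ j, A i j * (u j : ℤ) = b i) ∧
        v = ∑ j, c j * (u j : ℝ)} := by
  intro b hb
  obtain ⟨y, hy⟩ := hQ
  have hT' : ∀ t ∈ T, A *ᵥ t = 0 ∧ 0 < c ⬝ᵥ (fun j ↦ (t j : ℝ)) ∧ ∀ j, t j ≤ 1 :=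
    fun t ht ↦ ⟨funext (hT t ht).1, (hT t ht).2⟩
  obtain ⟨u₀, hu₀⟩ := hHilb b hb
  obtain ⟨u, hAu, hu⟩ := exists_not_intNonOpt (A := A) hy
    (fun t ht ↦ ⟨(hT' t ht).1, (hT' t ht).2.1⟩) hTest u₀
  have hAub : A *ᵥ (fun j ↦ (u j : ℤ)) = b := hAu.trans (funext hu₀)
  have hAubℝ : A.map (↑) *ᵥ (fun j ↦ (u j : ℝ)) = fun i ↦ (b i : ℝ) := by
    rw [map_intCast_mulVec_natCast, hAub]
  refine (IsLeast.csInf_eq (a := c ⬝ᵥ fun j ↦ (u j : ℝ)) ⟨?_, ?_⟩).trans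
    (IsLeast.csInf_eq ⟨?_, ?_⟩).symm
  · exact ⟨_, ⟨fun j ↦ Nat.cast_nonneg _, congrFun hAubℝ⟩, rfl⟩
  · rintro _ ⟨x, hx, rfl⟩
    exact dotProduct_natCast_le_of_not_intNonOpt_real hy hT' hTest hu hx.1
      ((funext hx.2).trans hAubℝ.symm)
  · exact ⟨u, congrFun hAub, rfl⟩
  · rintro _ ⟨u', hu', rfl⟩
    exact dotProduct_natCast_le_of_not_intNonOpt hu ((funext hu').trans hAub.symm)
end

section
/- Let A ∈ Z^{d×n} with columns a_1,…,a_n, let c ∈ R^n, and let ω ∈ N^n with κ := supp(ω) satisfying: (a) every proper subset of κ is contained in a cell of Δ_c and ω is a 0-1 vector, (b) Aω = 0 and c·ω > 0, and suppose 0 is an optimal solution to LP_{A,c}(0). Then every proper subset of the columns {a_i : i ∈ κ} is linearly independent; i.e. κ is a wheel. -/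
def isWheel {d n : ℕ} (A : Matrix (Fin d) (Fin n) ℤ) (c : Fin n → ℝ) (κ : Finset (Fin n)) : Prop :=
  (∀ i, ∑ j ∈ κ, A i j = 0) ∧ (0 < ∑ j ∈ κ, c j) ∧
    ∀ j ∈ κ, ∃ σ : Finset (Fin n), isCell A c σ ∧ κ.erase j ⊆ σ

theorem stmt4 {d n : ℕ} (A : Matrix (Fin d) (Fin n) ℤ) (c : Fin n → ℝ)
    (ω : Fin n → ℕ) (hω01 : ∀ j, ω j ≤ 1)
    (κ : Finset (Fin n)) (hκ : κ = Finset.univ.filter (fun j => ω j ≠ 0))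
    -- (a) every proper subset of κ is contained in a cell of Δ_c
    (ha : ∀ τ : Finset (Fin n), τ ⊂ κ → ∃ σ : Finset (Fin n), isCell A c σ ∧ τ ⊆ σ)
    -- (b) Aω = 0 and c·ω > 0
    (hker : ∀ i, ∑ j, A i j * (ω j : ℤ) = 0)
    (hcost : 0 < ∑ j, c j * (ω j : ℝ))
    -- 0 is an optimal solution to LP_{A,c}(0)
    (hzero : ∀ x : Fin n → ℝ, feas A (fun _ => (0 : ℝ)) x → 0 ≤ ∑ j, c j * x j) :
    (∀ τ : Finset (Fin n), τ ⊂ κ →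
      LinearIndependent ℝ (fun j : {j : Fin n // j ∈ τ} => (fun i => (A i j.1 : ℝ)))) ∧
    isWheel A c κ := by
  have hωκ : ∀ j, (ω j : ℝ) = if j ∈ κ then 1 else 0 := by
    intro j
    subst hκ
    simp only [Finset.mem_filter, Finset.mem_univ, true_and]
    rcases Nat.le_one_iff_eq_zero_or_eq_one.mp (hω01 j) with h | h <;> simp [h]
  have hsum : ∀ (f : Fin n → ℝ), ∑ j, f j * (ω j : ℝ) = ∑ j ∈ κ, f j := by
    intro f
    have : ∀ j, f j * (ω j : ℝ) = if j ∈ κ then f j else 0 := by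
      intro j; rw [hωκ]; split <;> simp
    rw [Finset.sum_congr rfl fun j _ => this j]
    simp [Finset.sum_ite_mem]
  have hS : 0 < ∑ j ∈ κ, c j := by rw [← hsum c]; exact hcost
  have hA0 : ∀ i, ∑ j ∈ κ, (A i j : ℝ) = 0 := by
    intro i
    rw [← hsum (fun j => (A i j : ℝ))]
    have := hker i
    push_cast
    exact_mod_cast this
  -- key dual vector for each k ∈ κ
  have hzk : ∀ k ∈ κ, ∃ z : Fin d → ℝ,
      (∀ m ∈ κ, m ≠ k → ∑ i, z i * (A i m : ℝ) = c m) ∧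
      ∑ i, z i * (A i k : ℝ) = c k - ∑ j ∈ κ, c j := by
    intro k hk
    obtain ⟨σ, ⟨z, hze, _⟩, hsub⟩ := ha (κ.erase k) (Finset.erase_ssubset hk)
    have heq : ∀ m ∈ κ, m ≠ k → ∑ i, z i * (A i m : ℝ) = c m := by
      intro m hm hmk
      exact hze m (hsub (Finset.mem_erase.mpr ⟨hmk, hm⟩))
    refine ⟨z, heq, ?_⟩
    have h1 : ∑ m ∈ κ, ∑ i, z i * (A i m : ℝ) = 0 := by
      rw [Finset.sum_comm]
      have : ∀ i, ∑ m ∈ κ, z i * (A i m : ℝ) = 0 := by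
        intro i
        rw [← Finset.mul_sum, hA0 i, mul_zero]
      simp [this]
    have h2 : ∑ m ∈ κ, ∑ i, z i * (A i m : ℝ)
        = (∑ i, z i * (A i k : ℝ)) + ∑ m ∈ κ.erase k, ∑ i, z i * (A i m : ℝ) :=
      (Finset.add_sum_erase κ _ hk).symm
    have h3 : ∑ m ∈ κ.erase k, ∑ i, z i * (A i m : ℝ) = ∑ m ∈ κ.erase k, c m := by
      refine Finset.sum_congr rfl fun m hm => ?_
      exact heq m (Finset.mem_of_mem_erase hm) (Finset.ne_of_mem_erase hm)
    have h4 : ∑ j ∈ κ, c j = c k + ∑ m ∈ κ.erase k, c m := (Finset.add_sum_erase κ c hk).symm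
    rw [h2, h3] at h1
    linarith
  constructor
  · intro τ hτ
    rw [Fintype.linearIndependent_iff]
    intro g hg k
    have hgi : ∀ i, ∑ m : {j // j ∈ τ}, g m * (A i m.1 : ℝ) = 0 := by
      intro i
      have := congrFun hg i
      simpa [Finset.sum_apply, mul_comm] using this
    have swap : ∀ (z : Fin d → ℝ),
        ∑ m : {j // j ∈ τ}, g m * (∑ i, z i * (A i m.1 : ℝ)) = 0 := by
      intro z
      have h : ∑ m : {j // j ∈ τ}, g m * (∑ i, z i * (A i m.1 : ℝ))
          = ∑ i, z i * ∑ m : {j // j ∈ τ}, g m * (A i m.1 : ℝ) := by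
        simp_rw [Finset.mul_sum]
        rw [Finset.sum_comm]
        exact Finset.sum_congr rfl fun m _ => Finset.sum_congr rfl fun i _ => by ring
      rw [h]
      exact Finset.sum_eq_zero fun i _ => by rw [hgi i, mul_zero]
    obtain ⟨σ, ⟨z0, hz0e, _⟩, hsub0⟩ := ha τ hτ
    have h0 : ∑ m : {j // j ∈ τ}, g m * c m.1 = 0 := by
      have := swap z0
      rw [Finset.sum_congr rfl
        (fun (m : {j // j ∈ τ}) _ => by rw [hz0e m.1 (hsub0 m.2)])] at this
      exact this
    have hkκ : (k : Fin n) ∈ κ := hτ.1 k.2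
    obtain ⟨z, hze, hzck⟩ := hzk k hkκ
    have hv : ∀ m : {j // j ∈ τ}, ∑ i, z i * (A i m.1 : ℝ)
        = c m.1 - (if m = k then ∑ j ∈ κ, c j else 0) := by
      intro m
      by_cases hm : m = k
      · subst hm; simp [hzck]
      · rw [hze m.1 (hτ.1 m.2) (fun h => hm (Subtype.ext h))]
        simp [hm]
    have h1 := swap z
    rw [Finset.sum_congr rfl (fun m _ => by rw [hv m])] at h1
    have h2 : ∑ m : {j // j ∈ τ}, g m * (c m.1 - (if m = k then ∑ j ∈ κ, c j else 0))
        = (∑ m : {j // j ∈ τ}, g m * c m.1) - g k * ∑ j ∈ κ, c j := by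
      have he : ∀ m : {j // j ∈ τ}, g m * (c m.1 - (if m = k then ∑ j ∈ κ, c j else 0))
          = g m * c m.1 - (if m = k then g m * (∑ j ∈ κ, c j) else 0) := by
        intro m; split <;> ring
      rw [Finset.sum_congr rfl fun m _ => he m, Finset.sum_sub_distrib,
        Finset.sum_ite_eq' Finset.univ k (fun m => g m * (∑ j ∈ κ, c j))]
      simp
    rw [h2, h0, zero_sub, neg_eq_zero] at h1
    exact (mul_eq_zero.mp h1).resolve_right hS.ne'
  · refine ⟨?_, hS, ?_⟩
    · intro i
      have := hA0 i
      exact_mod_cast this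
    · intro j hj
      exact ha (κ.erase j) (Finset.erase_ssubset hj)
end

section
/- Let A ∈ Z^{d×n} be a set-packing configuration: the first n−d columns lie in {0,1}^d, the last d columns are −I_d, and c = (1,…,1,0,…,0) with n−d ones. Let γ(b) denote the optimal value of min{c·x : Ax = b, x ≥ 0} for b ∈ Z^d, and assume γ(b) ∈ Z for all b ∈ Z^d. If x is an optimal solution of this LP with x_l > 0 for some index l with n−d+1 ≤ l ≤ n (so a_l = −e_{l−(n−d)} and c_l = 0), then there exists an optimal solution x* with x*_l ≥ 1. -/
def lpOpt {d n : ℕ} (A : Matrix (Fin d) (Fin n) ℤ) (c : Fin n → ℝ) (b : Fin d → ℝ)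
    (x : Fin n → ℝ) : Prop :=
  feas A b x ∧ ∀ y, feas A b y → ∑ j, c j * x j ≤ ∑ j, c j * y j

open Matrix Bornology

section LinearProgram

variable {d n : ℕ} {A : Matrix (Fin d) (Fin n) ℤ} {c : Fin n → ℝ} {b : Fin d → ℝ}

theorem feas_iff {x : Fin n → ℝ} :
    feas A b x ↔ 0 ≤ x ∧ A.map (Int.cast : ℤ → ℝ) *ᵥ x = b := by
  simp only [feas, Pi.le_def, Pi.zero_apply, funext_iff, mulVec, dotProduct, map_apply]

theorem feas.add {b' : Fin d → ℝ} {x v : Fin n → ℝ} (hx : feas A b x)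
    (hv : A.map (Int.cast : ℤ → ℝ) *ᵥ v = b') (hnn : 0 ≤ x + v) : feas A (b + b') (x + v) := by
  rw [feas_iff] at hx ⊢
  exact ⟨hnn, by rw [mulVec_add, hx.2, hv]⟩

theorem lpOpt.dotProduct_le {x y : Fin n → ℝ} (hx : lpOpt A c b x) (hy : feas A b y) :
    c ⬝ᵥ x ≤ c ⬝ᵥ y :=
  hx.2 y hy

theorem lpOpt_of_feas_of_cost_le {x y : Fin n → ℝ} (hx : lpOpt A c b x) (hy : feas A b y)
    (hcost : c ⬝ᵥ y ≤ c ⬝ᵥ x) : lpOpt A c b y :=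
  ⟨hy, fun _ hz => hcost.trans (hx.dotProduct_le hz)⟩

theorem isClosed_setOf_feas : IsClosed {x | feas A b x} := by
  simp only [feas_iff, Set.ofPred_and]
  exact (isClosed_le continuous_const continuous_id).inter
    (isClosed_eq (continuous_const.matrix_mulVec continuous_id) continuous_const)

theorem exists_lpOpt_of_isBounded {x₀ : Fin n → ℝ} (hx₀ : feas A b x₀)
    (hbdd : IsBounded {x | feas A b x ∧ c ⬝ᵥ x ≤ c ⬝ᵥ x₀}) : ∃ x, lpOpt A c b x := by
  have hcont : Continuous (c ⬝ᵥ · : (Fin n → ℝ) → ℝ) := continuous_const.dotProduct continuous_id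
  have hcpt : IsCompact {x | feas A b x ∧ c ⬝ᵥ x ≤ c ⬝ᵥ x₀} :=
    Metric.isCompact_of_isClosed_isBounded
      (isClosed_setOf_feas.inter (isClosed_le hcont continuous_const)) hbdd
  obtain ⟨x, ⟨hx, hxx₀⟩, hmin⟩ := hcpt.exists_isMinOn ⟨x₀, hx₀, le_rfl⟩ hcont.continuousOn
  refine ⟨x, hx, fun y hy => ?_⟩
  rcases le_total (c ⬝ᵥ y) (c ⬝ᵥ x₀) with hyx₀ | hx₀y
  · exact hmin ⟨hy, hyx₀⟩
  · exact hxx₀.trans hx₀y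

end LinearProgram

section SetPacking

variable {d m : ℕ} {A : Matrix (Fin d) (Fin (m + d)) ℤ} {c : Fin (m + d) → ℝ}

def coverVec (A : Matrix (Fin d) (Fin (m + d)) ℤ) (j : Fin m) : Fin (m + d) → ℝ :=
  Fin.append (Pi.single j 1) fun i => (A i (Fin.castAdd d j) : ℝ)

theorem sum_slack_mul (hslack : ∀ i, ∀ j : Fin d, A i (Fin.natAdd m j) = if i = j then -1 else 0)
    (g : Fin d → ℝ) (i : Fin d) : ∑ j : Fin d, (A i (Fin.natAdd m j) : ℝ) * g j = -g i := by
  simp [hslack, apply_ite]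

theorem mulVec_single_natAdd
    (hslack : ∀ i, ∀ j : Fin d, A i (Fin.natAdd m j) = if i = j then -1 else 0) (l : Fin d) :
    A.map (Int.cast : ℤ → ℝ) *ᵥ Pi.single (Fin.natAdd m l) 1 = -Pi.single l 1 := by
  ext i
  simp [hslack, Pi.single_apply, apply_ite]

theorem mulVec_coverVec
    (hslack : ∀ i, ∀ j : Fin d, A i (Fin.natAdd m j) = if i = j then -1 else 0) (j : Fin m) :
    A.map (Int.cast : ℤ → ℝ) *ᵥ coverVec A j = 0 := by
  ext i
  simp [mulVec, dotProduct, Fin.sum_univ_add, coverVec, sum_slack_mul hslack, Pi.single_apply]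

theorem dotProduct_eq_sum_castAdd (hc1 : ∀ j : Fin m, c (Fin.castAdd d j) = 1)
    (hc0 : ∀ j : Fin d, c (Fin.natAdd m j) = 0) (y : Fin (m + d) → ℝ) :
    c ⬝ᵥ y = ∑ j : Fin m, y (Fin.castAdd d j) := by
  simp [dotProduct, Fin.sum_univ_add, hc1, hc0]

theorem dotProduct_coverVec (hc1 : ∀ j : Fin m, c (Fin.castAdd d j) = 1)
    (hc0 : ∀ j : Fin d, c (Fin.natAdd m j) = 0) (j : Fin m) : c ⬝ᵥ coverVec A j = 1 := by
  simp [dotProduct_eq_sum_castAdd hc1 hc0, coverVec]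

theorem feas.sum_castAdd_sub_slack
    (hslack : ∀ i, ∀ j : Fin d, A i (Fin.natAdd m j) = if i = j then -1 else 0)
    {b : Fin d → ℝ} {x : Fin (m + d) → ℝ} (hx : feas A b x) (i : Fin d) :
    ∑ j : Fin m, (A i (Fin.castAdd d j) : ℝ) * x (Fin.castAdd d j) - x (Fin.natAdd m i) = b i := by
  rw [← hx.2 i, Fin.sum_univ_add, sum_slack_mul hslack (fun j => x (Fin.natAdd m j))]
  ring

theorem isBounded_setOf_feas_cost_le (hle : ∀ i, ∀ j : Fin m, A i (Fin.castAdd d j) ≤ 1)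
    (hslack : ∀ i, ∀ j : Fin d, A i (Fin.natAdd m j) = if i = j then -1 else 0)
    (hc1 : ∀ j : Fin m, c (Fin.castAdd d j) = 1) (hc0 : ∀ j : Fin d, c (Fin.natAdd m j) = 0)
    (b : Fin d → ℝ) (K : ℝ) : IsBounded {y | feas A b y ∧ c ⬝ᵥ y ≤ K} := by
  refine (Metric.isBounded_Icc 0 (Fin.append (fun _ => K) fun i => K - b i)).subset ?_
  rintro y ⟨hy, hyK⟩
  rw [dotProduct_eq_sum_castAdd hc1 hc0] at hyK
  refine ⟨hy.1, fun j => Fin.addCases (fun j => ?_) (fun i => ?_) j⟩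
  · simpa using (Finset.single_le_sum (fun j _ => hy.1 _) (Finset.mem_univ j)).trans hyK
  · have hrow := hy.sum_castAdd_sub_slack hslack i
    have hle : ∑ j : Fin m, (A i (Fin.castAdd d j) : ℝ) * y (Fin.castAdd d j)
        ≤ ∑ j : Fin m, y (Fin.castAdd d j) :=
      Finset.sum_le_sum fun j _ => mul_le_of_le_one_left (hy.1 _) (by exact_mod_cast hle i j)
    simp only [Fin.append_right]
    linarith

theorem feas.exists_castAdd_eq_one
    (hclq : ∀ i, ∀ j : Fin m, A i (Fin.castAdd d j) = 0 ∨ A i (Fin.castAdd d j) = 1)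
    (hslack : ∀ i, ∀ j : Fin d, A i (Fin.natAdd m j) = if i = j then -1 else 0)
    {b : Fin d → ℤ} {x : Fin (m + d) → ℝ} (hx : feas A (fun i => (b i : ℝ)) x) {l : Fin d}
    (hpos : 0 < x (Fin.natAdd m l)) (hlt : x (Fin.natAdd m l) < 1) :
    ∃ j, A l (Fin.castAdd d j) = 1 := by
  by_contra! hne
  have hrow := hx.sum_castAdd_sub_slack hslack l
  simp only [fun j => (hclq l j).resolve_right (hne j), Int.cast_zero, zero_mul,
    Finset.sum_const_zero, zero_sub] at hrow
  have hint : x (Fin.natAdd m l) = ((-b l : ℤ) : ℝ) := by push_cast; linarith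
  rw [hint] at hpos hlt
  norm_cast at hpos hlt
  omega

theorem feas.add_coverVec_sub_single
    (hslack : ∀ i, ∀ j : Fin d, A i (Fin.natAdd m j) = if i = j then -1 else 0)
    {b : Fin d → ℝ} {x : Fin (m + d) → ℝ} (hx : feas A b x) {l : Fin d} {j : Fin m}
    (hcol : ∀ i, 0 ≤ A i (Fin.castAdd d j)) (hj : A l (Fin.castAdd d j) = 1)
    (hxl : x (Fin.natAdd m l) ≤ 1) :
    feas A (b + Pi.single l 1)
      (x + ((1 - x (Fin.natAdd m l)) • coverVec A j - Pi.single (Fin.natAdd m l) 1)) := by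
  refine hx.add (by simp [mulVec_sub, mulVec_smul, mulVec_coverVec hslack,
    mulVec_single_natAdd hslack]) fun k => Fin.addCases (fun k => ?_) (fun i => ?_) k
  · have := hx.1 (Fin.castAdd d k)
    have hne : Fin.castAdd d k ≠ Fin.natAdd m l := Fin.ne_of_lt (by rw [Fin.lt_def]; simp; omega)
    simp [coverVec, Pi.single_apply, hne]
    split_ifs <;> linarith
  · have hxi := hx.1 (Fin.natAdd m i)
    have := hcol i
    by_cases hil : i = l
    · subst hil
      simp [coverVec, hj]
    · simp [coverVec, hil]
      positivity

theorem feas.add_single_natAdd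
    (hslack : ∀ i, ∀ j : Fin d, A i (Fin.natAdd m j) = if i = j then -1 else 0)
    {b : Fin d → ℝ} {x : Fin (m + d) → ℝ} {l : Fin d} (hx : feas A (b + Pi.single l 1) x) :
    feas A b (x + Pi.single (Fin.natAdd m l) 1) := by
  have h := hx.add (mulVec_single_natAdd hslack l)
    (add_nonneg hx.1 (Pi.single_nonneg.2 zero_le_one))
  rwa [add_neg_cancel_right] at h

theorem dotProduct_add_smul_coverVec_sub_single (hc1 : ∀ j : Fin m, c (Fin.castAdd d j) = 1)
    (hc0 : ∀ j : Fin d, c (Fin.natAdd m j) = 0) (x : Fin (m + d) → ℝ) (t : ℝ) (j : Fin m)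
    (l : Fin d) :
    c ⬝ᵥ (x + (t • coverVec A j - Pi.single (Fin.natAdd m l) 1)) = c ⬝ᵥ x + t := by
  simp [dotProduct_add, dotProduct_sub, dotProduct_coverVec hc1 hc0, hc0]

end SetPacking

/-- Fulkerson's pluperfect lemma, slack-variable case. -/
theorem stmt9 {d m : ℕ} (A : Matrix (Fin d) (Fin (m + d)) ℤ) (c : Fin (m + d) → ℝ)
    (hclq : ∀ i, ∀ j : Fin m, A i (Fin.castAdd d j) = 0 ∨ A i (Fin.castAdd d j) = 1)
    (hslack : ∀ i, ∀ j : Fin d, A i (Fin.natAdd m j) = if i = j then -1 else 0)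
    (hc1 : ∀ j : Fin m, c (Fin.castAdd d j) = 1)
    (hc0 : ∀ j : Fin d, c (Fin.natAdd m j) = 0)
    -- γ(b) ∈ ℤ for all b ∈ ℤ^d
    (hγ : ∀ b : Fin d → ℤ, ∀ x, lpOpt A c (fun i => (b i : ℝ)) x →
      ∃ k : ℤ, ∑ j, c j * x j = (k : ℝ))
    (b : Fin d → ℤ) (x : Fin (m + d) → ℝ) (hx : lpOpt A c (fun i => (b i : ℝ)) x)
    (l : Fin d) (hpos : 0 < x (Fin.natAdd m l)) :
    ∃ xs, lpOpt A c (fun i => (b i : ℝ)) xs ∧ 1 ≤ xs (Fin.natAdd m l) := by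
  rcases le_or_gt 1 (x (Fin.natAdd m l)) with hge | hlt
  · exact ⟨x, hx, hge⟩
  have hcast : (fun i => ((b + Pi.single l 1 : Fin d → ℤ) i : ℝ))
      = (fun i => (b i : ℝ)) + Pi.single l 1 := by
    ext i; by_cases h : i = l <;> simp [h]
  obtain ⟨k, hk : c ⬝ᵥ x = k⟩ := hγ b x hx
  obtain ⟨j, hj⟩ := hx.1.exists_castAdd_eq_one hclq hslack hpos hlt
  have hcol i : 0 ≤ A i (Fin.castAdd d j) := by rcases hclq i j with h | h <;> simp [h]
  have hx' := hcast ▸ hx.1.add_coverVec_sub_single hslack hcol hj hlt.le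
  have hle i j : A i (Fin.castAdd d j) ≤ 1 := (hclq i j).elim (by simp [·]) (·.le)
  obtain ⟨xs, hxs⟩ :=
    exists_lpOpt_of_isBounded hx' (isBounded_setOf_feas_cost_le hle hslack hc1 hc0 _ _)
  obtain ⟨k', hk' : c ⬝ᵥ xs = k'⟩ := hγ _ xs hxs
  have hk'_le : k' ≤ k := by
    have hxs_le := hxs.dotProduct_le hx'
    rw [dotProduct_add_smul_coverVec_sub_single hc1 hc0, hk, hk'] at hxs_le
    exact Int.lt_add_one_iff.1 (by exact_mod_cast (by linarith : (k' : ℝ) < k + 1))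
  have hys := (hcast ▸ hxs.1).add_single_natAdd hslack
  refine ⟨_, lpOpt_of_feas_of_cost_le hx hys ?_, by simpa using hxs.1.1 (Fin.natAdd m l)⟩
  rw [dotProduct_add, dotProduct_single, hc0, hk', hk]
  simpa using hk'_le
end

section
/- Let A ∈ Z^{d×n} be a set-packing configuration (first n−d columns in {0,1}^d, last d columns −I_d) and c = (1,…,1,0,…,0). Let γ(b) be the optimal value of LP_{A,c}(b) and assume γ(b) ∈ Z for all b ∈ Z^d ∩ cone(A). If x is an optimal solution of LP_{A,c}(b) with x_l > 0 for some clique index 1 ≤ l ≤ n−d, then there exists an optimal solution x* of LP_{A,c}(b) with x*_l ≥ 1. -/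
section aux
variable {d m : ℕ} (A : Matrix (Fin d) (Fin (m + d)) ℤ)

/-- Clique-part sum. -/
noncomputable def Su (u : Fin m → ℝ) (i : Fin d) : ℝ :=
  ∑ j, (A i (Fin.castAdd d j) : ℝ) * u j

lemma cost_eq (c : Fin (m + d) → ℝ)
    (hc1 : ∀ j : Fin m, c (Fin.castAdd d j) = 1)
    (hc0 : ∀ j : Fin d, c (Fin.natAdd m j) = 0) (x : Fin (m + d) → ℝ) :
    ∑ j, c j * x j = ∑ j : Fin m, x (Fin.castAdd d j) := by
  rw [Fin.sum_univ_add]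
  simp [hc1, hc0]

lemma constr_eq
    (hslack : ∀ i, ∀ j : Fin d, A i (Fin.natAdd m j) = if i = j then -1 else 0)
    (x : Fin (m + d) → ℝ) (i : Fin d) :
    ∑ j, (A i j : ℝ) * x j = Su A (fun j => x (Fin.castAdd d j)) i - x (Fin.natAdd m i) := by
  rw [Fin.sum_univ_add, Su]
  congr 1
  have : ∀ k : Fin d, (A i (Fin.natAdd m k) : ℝ) * x (Fin.natAdd m k)
      = if i = k then -x (Fin.natAdd m k) else 0 := by
    intro k
    rw [hslack i k]
    split <;> simp
  rw [Finset.sum_congr rfl (fun k _ => this k), Finset.sum_ite_eq]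
  simp

/-- feasibility of the extension of a clique vector. -/
lemma feas_ext
    (hslack : ∀ i, ∀ j : Fin d, A i (Fin.natAdd m j) = if i = j then -1 else 0)
    (b : Fin d → ℝ) (u : Fin m → ℝ) (hu : ∀ j, 0 ≤ u j) (hs : ∀ i, b i ≤ Su A u i) :
    feas A b (fun j => Fin.addCases u (fun i => Su A u i - b i) j) := by
  constructor
  · intro j
    refine Fin.addCases (fun j => ?_) (fun i => ?_) j
    · simpa using hu j
    · simpa using sub_nonneg.mpr (hs i)
  · intro i
    rw [constr_eq A hslack]
    simp

/-- Existence of an optimal solution. -/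
lemma exists_opt (c : Fin (m + d) → ℝ)
    (hslack : ∀ i, ∀ j : Fin d, A i (Fin.natAdd m j) = if i = j then -1 else 0)
    (hc1 : ∀ j : Fin m, c (Fin.castAdd d j) = 1)
    (hc0 : ∀ j : Fin d, c (Fin.natAdd m j) = 0)
    (b : Fin d → ℝ) (x0 : Fin (m + d) → ℝ) (hx0 : feas A b x0) :
    ∃ x, lpOpt A c b x := by
  classical
  set C : ℝ := ∑ j : Fin m, x0 (Fin.castAdd d j) with hC
  set K : Set (Fin m → ℝ) :=
    {u | (∀ j, 0 ≤ u j) ∧ (∀ i, b i ≤ Su A u i) ∧ ∑ j, u j ≤ C} with hK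
  -- slack of a feasible point
  have slack_eq : ∀ y, feas A b y → ∀ i,
      y (Fin.natAdd m i) = Su A (fun j => y (Fin.castAdd d j)) i - b i := by
    intro y hy i
    have := hy.2 i
    rw [constr_eq A hslack] at this
    linarith
  have mem_K : ∀ y, feas A b y → (∑ j : Fin m, y (Fin.castAdd d j)) ≤ C →
      (fun j => y (Fin.castAdd d j)) ∈ K := by
    intro y hy hyC
    refine ⟨fun j => hy.1 _, fun i => ?_, hyC⟩
    have h1 := slack_eq y hy i
    have h2 := hy.1 (Fin.natAdd m i)
    linarith
  have hne : K.Nonempty := ⟨_, mem_K x0 hx0 le_rfl⟩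
  have hsub : K ⊆ Set.Icc (fun _ => 0) (fun _ => C) := by
    intro u hu
    constructor <;> intro j
    · exact hu.1 j
    · calc u j ≤ ∑ k, u k := Finset.single_le_sum (fun k _ => hu.1 k) (Finset.mem_univ j)
        _ ≤ C := hu.2.2
  have hSc : ∀ i, Continuous fun u : Fin m → ℝ => Su A u i := by
    intro i
    exact continuous_finset_sum _ fun j _ => continuous_const.mul (continuous_apply j)
  have hsum : Continuous fun u : Fin m → ℝ => ∑ j, u j :=
    continuous_finset_sum _ fun j _ => continuous_apply j
  have hclosed : IsClosed K := by
    have h1 : IsClosed {u : Fin m → ℝ | ∀ j, 0 ≤ u j} := by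
      have : {u : Fin m → ℝ | ∀ j, 0 ≤ u j} = ⋂ j, {u | 0 ≤ u j} := by
        ext; simp [Set.mem_iInter]
      rw [this]
      exact isClosed_iInter fun j => isClosed_le continuous_const (continuous_apply j)
    have h2 : IsClosed {u : Fin m → ℝ | ∀ i, b i ≤ Su A u i} := by
      have : {u : Fin m → ℝ | ∀ i, b i ≤ Su A u i} = ⋂ i, {u | b i ≤ Su A u i} := by
        ext; simp [Set.mem_iInter]
      rw [this]
      exact isClosed_iInter fun i => isClosed_le continuous_const (hSc i)
    have h3 : IsClosed {u : Fin m → ℝ | ∑ j, u j ≤ C} :=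
      isClosed_le hsum continuous_const
    exact (h1.inter (h2.inter h3))
  have hcpt : IsCompact K := (isCompact_Icc).of_isClosed_subset hclosed hsub
  obtain ⟨u, huK, hmin⟩ := hcpt.exists_isMinOn hne hsum.continuousOn
  refine ⟨fun j => Fin.addCases u (fun i => Su A u i - b i) j, ?_, ?_⟩
  · exact feas_ext A hslack b u huK.1 huK.2.1
  · intro y hy
    rw [cost_eq c hc1 hc0, cost_eq c hc1 hc0]
    have hxu : (∑ j : Fin m, (fun j => Fin.addCases (motive := fun _ => ℝ) u
        (fun i => Su A u i - b i) j) (Fin.castAdd d j)) = ∑ j, u j := by simp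
    rw [hxu]
    by_cases hyC : (∑ j : Fin m, y (Fin.castAdd d j)) ≤ C
    · exact hmin (mem_K y hy hyC)
    · have h0 : ∑ j, u j ≤ C := by
        have := hmin hne.choose_spec
        calc ∑ j, u j ≤ ∑ j, (fun j => x0 (Fin.castAdd d j)) j := hmin (mem_K x0 hx0 le_rfl)
          _ = C := rfl
      linarith [not_le.mp hyC]

end aux

/-- Fulkerson's pluperfect lemma, clique-variable case. -/
theorem stmt10 {d m : ℕ} (A : Matrix (Fin d) (Fin (m + d)) ℤ) (c : Fin (m + d) → ℝ)
    (hclq : ∀ i, ∀ j : Fin m, A i (Fin.castAdd d j) = 0 ∨ A i (Fin.castAdd d j) = 1)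
    (hslack : ∀ i, ∀ j : Fin d, A i (Fin.natAdd m j) = if i = j then -1 else 0)
    (hc1 : ∀ j : Fin m, c (Fin.castAdd d j) = 1)
    (hc0 : ∀ j : Fin d, c (Fin.natAdd m j) = 0)
    -- γ(b) ∈ ℤ for all b ∈ ℤ^d ∩ cone(A)
    (hγ : ∀ b : Fin d → ℤ, (∃ x, feas A (fun i => (b i : ℝ)) x) →
      ∀ x, lpOpt A c (fun i => (b i : ℝ)) x →
      ∃ k : ℤ, ∑ j, c j * x j = (k : ℝ))
    (b : Fin d → ℤ) (x : Fin (m + d) → ℝ) (hx : lpOpt A c (fun i => (b i : ℝ)) x)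
    (l : Fin m) (hpos : 0 < x (Fin.castAdd d l)) :
    ∃ xs, lpOpt A c (fun i => (b i : ℝ)) xs ∧ 1 ≤ xs (Fin.castAdd d l) := by
  classical
  rcases le_or_gt 1 (x (Fin.castAdd d l)) with h1 | h1
  · exact ⟨x, hx, h1⟩
  set t : ℝ := x (Fin.castAdd d l) with ht
  set b' : Fin d → ℤ := fun i => b i - A i (Fin.castAdd d l) with hb'
  set u : Fin m → ℝ := fun j => x (Fin.castAdd d j) - if j = l then t else 0 with hu
  set y : Fin (m + d) → ℝ := fun j => Fin.addCases u
      (fun i => x (Fin.natAdd m i) + (A i (Fin.castAdd d l) : ℝ) * (1 - t)) j with hy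
  have hAl : ∀ i, (0 : ℝ) ≤ (A i (Fin.castAdd d l) : ℝ) := by
    intro i; rcases hclq i l with h | h <;> simp [h]
  have hSu : ∀ i, Su A u i
      = Su A (fun j => x (Fin.castAdd d j)) i - (A i (Fin.castAdd d l) : ℝ) * t := by
    intro i
    have hterm : ∀ j : Fin m, (A i (Fin.castAdd d j) : ℝ) * u j
        = (A i (Fin.castAdd d j) : ℝ) * x (Fin.castAdd d j)
          - (if j = l then (A i (Fin.castAdd d l) : ℝ) * t else 0) := by
      intro j
      by_cases hj : j = l <;> simp [hu, hj, mul_sub]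
    rw [Su, Su, Finset.sum_congr rfl (fun j _ => hterm j), Finset.sum_sub_distrib,
      Finset.sum_ite_eq' Finset.univ l]
    simp
  have hux : ∀ j : Fin m, u j = x (Fin.castAdd d j) - if j = l then t else 0 := fun j => rfl
  have hxslack : ∀ i, x (Fin.natAdd m i)
      = Su A (fun j => x (Fin.castAdd d j)) i - (b i : ℝ) := by
    intro i
    have := hx.1.2 i
    rw [constr_eq A hslack] at this
    linarith
  have hyfeas : feas A (fun i => (b' i : ℝ)) y := by
    constructor
    · intro j
      refine Fin.addCases (fun j => ?_) (fun i => ?_) j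
      · simp only [hy, Fin.addCases_left]
        by_cases hj : j = l
        · simp [hu, hj, ← ht]
        · have := hx.1.1 (Fin.castAdd d j)
          simp [hu, hj]; linarith
      · simp only [hy, Fin.addCases_right]
        have h2 := hx.1.1 (Fin.natAdd m i)
        have h3 : (0:ℝ) ≤ (A i (Fin.castAdd d l) : ℝ) * (1 - t) :=
          mul_nonneg (hAl i) (by linarith)
        linarith
    · intro i
      rw [constr_eq A hslack]
      have hyc : (fun j => y (Fin.castAdd d j)) = u := by
        funext j; simp [hy]
      rw [hyc, hSu i]
      simp only [hy, Fin.addCases_right]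
      rw [hxslack i]
      push_cast [hb']
      ring
  obtain ⟨xp, hxp⟩ := exists_opt A c hslack hc1 hc0 (fun i => (b' i : ℝ)) y hyfeas
  obtain ⟨k', hk'⟩ := hγ b' ⟨y, hyfeas⟩ xp hxp
  obtain ⟨k, hk⟩ := hγ b ⟨x, hx.1⟩ x hx
  -- cost of y is cost of x minus t
  have hcy : ∑ j, c j * y j = (∑ j, c j * x j) - t := by
    rw [cost_eq c hc1 hc0, cost_eq c hc1 hc0]
    have : (∑ j : Fin m, y (Fin.castAdd d j)) = ∑ j, u j := by
      apply Finset.sum_congr rfl; intro j _; simp [hy]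
    rw [this]
    rw [Finset.sum_congr rfl (fun j _ => hux j), Finset.sum_sub_distrib,
      Finset.sum_ite_eq' Finset.univ l]
    simp
  have hle : (k' : ℝ) ≤ (k : ℝ) - t := by
    have := hxp.2 y hyfeas
    rw [hk', hcy, hk] at this
    linarith
  have hk'k : k' + 1 ≤ k := by
    have : (k' : ℝ) < (k : ℝ) := by linarith
    exact_mod_cast Int.add_one_le_iff.mpr (by exact_mod_cast this)
  set xs : Fin (m + d) → ℝ :=
    fun j => xp j + if j = Fin.castAdd d l then 1 else 0 with hxs
  have hxsfeas : feas A (fun i => (b i : ℝ)) xs := by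
    constructor
    · intro j
      by_cases hj : j = Fin.castAdd d l
      · subst hj
        have := hxp.1.1 (Fin.castAdd d l)
        simp only [hxs, if_pos rfl, if_true]
        linarith
      · have := hxp.1.1 j
        simp only [hxs, if_neg hj, add_zero]
        linarith
    · intro i
      have : ∑ j, (A i j : ℝ) * xs j
          = (∑ j, (A i j : ℝ) * xp j) + (A i (Fin.castAdd d l) : ℝ) := by
        simp only [hxs, mul_add, Finset.sum_add_distrib, mul_ite, mul_one, mul_zero,
          Finset.sum_ite_eq' Finset.univ, Finset.mem_univ, if_true]
      rw [this, hxp.1.2 i]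
      push_cast [hb']
      ring
  have hcxs : ∑ j, c j * xs j = (k' : ℝ) + 1 := by
    have : ∑ j, c j * xs j = (∑ j, c j * xp j) + c (Fin.castAdd d l) := by
      simp only [hxs, mul_add, Finset.sum_add_distrib, mul_ite, mul_one, mul_zero,
        Finset.sum_ite_eq' Finset.univ, Finset.mem_univ, if_true]
    rw [this, hk', hc1 l]
  refine ⟨xs, ⟨hxsfeas, ?_⟩, ?_⟩
  · intro z hz
    have h2 := hx.2 z hz
    have h3 : (k' : ℝ) + 1 ≤ (k : ℝ) := by exact_mod_cast hk'k
    rw [hcxs]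
    rw [hk] at h2
    linarith
  · have := hxp.1.1 (Fin.castAdd d l)
    simp only [hxs, if_pos rfl]
    simp only [if_true]
    linarith
end

section
/- Let A ∈ Z^{d×n}, c ∈ R^n, b ∈ Z^d, and let γ(b') denote the optimal value of min{c·x : Ax = b', x ≥ 0}, assumed finite and integer for all b' ∈ Z^d ∩ cone(A). Suppose for every integer vector b' ∈ cone(A) and every index l, whenever some optimal solution has l-th coordinate positive there is an optimal solution with l-th coordinate at least 1. Then for every b ∈ Z^d ∩ cone(A) and every index l, the quantity λ_l(b) := max{x_l : x optimal for LP_{A,c}(b)} is a nonnegative integer. -/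
private lemma sum_add_single {n : ℕ} (f x : Fin n → ℝ) (l : Fin n) (t : ℝ) :
    ∑ j, f j * (x j + if j = l then t else 0) = (∑ j, f j * x j) + f l * t := by
  rw [Finset.sum_congr rfl (fun j _ => mul_add (f j) _ _), Finset.sum_add_distrib]
  congr 1
  simp [mul_ite, Finset.sum_ite_eq']

theorem stmt11 {d n : ℕ} (A : Matrix (Fin d) (Fin n) ℤ) (c : Fin n → ℝ)
    -- the optimal value exists and is integer for every integer b in cone(A)
    (hopt : ∀ b : Fin d → ℤ, (∃ x, feas A (fun i => (b i : ℝ)) x) →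
      (∃ x, lpOpt A c (fun i => (b i : ℝ)) x) ∧
      ∀ x, lpOpt A c (fun i => (b i : ℝ)) x → ∃ k : ℤ, ∑ j, c j * x j = (k : ℝ))
    -- whenever some optimal solution has positive l-th coordinate,
    -- some optimal solution has l-th coordinate at least 1
    (hlift : ∀ b : Fin d → ℤ, (∃ x, feas A (fun i => (b i : ℝ)) x) → ∀ l,
      (∃ x, lpOpt A c (fun i => (b i : ℝ)) x ∧ 0 < x l) →
      ∃ x, lpOpt A c (fun i => (b i : ℝ)) x ∧ 1 ≤ x l) :
    ∀ b : Fin d → ℤ, (∃ x, feas A (fun i => (b i : ℝ)) x) → ∀ l : Fin n, ∀ lam : ℝ,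
      IsGreatest {t : ℝ | ∃ x, lpOpt A c (fun i => (b i : ℝ)) x ∧ x l = t} lam →
      ∃ k : ℕ, lam = (k : ℝ) := by
  intro b hb l lam hlam
  obtain ⟨⟨x, hx, hxl⟩, hub⟩ := hlam
  have hlam0 : 0 ≤ lam := hxl ▸ hx.1.1 l
  rcases eq_or_lt_of_le (Int.floor_le lam) with heq | hmlt
  · -- lam is an integer
    refine ⟨(⌊lam⌋).toNat, ?_⟩
    have h1 : ((⌊lam⌋.toNat : ℤ) : ℝ) = lam := by
      rw [Int.toNat_of_nonneg (Int.floor_nonneg.mpr hlam0)]; exact heq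
    exact_mod_cast h1.symm
  · exfalso
    set m : ℤ := ⌊lam⌋ with hm
    have hm0 : (0:ℝ) ≤ (m:ℝ) := by
      exact_mod_cast Int.floor_nonneg.mpr hlam0
    have hlt1 : lam < (m:ℝ) + 1 := Int.lt_floor_add_one lam
    set b' : Fin d → ℤ := fun i => b i - m * A i l with hb'
    -- lifting feasible points of b' back to b
    have lift_feas : ∀ y, feas A (fun i => ((b' i : ℤ) : ℝ)) y →
        feas A (fun i => (b i : ℝ)) (fun j => y j + if j = l then (m:ℝ) else 0) := by
      intro y hy
      constructor
      · intro j
        by_cases hj : j = l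
        · subst hj; simp only [eq_self_iff_true, if_true]
          have := hy.1 j; linarith
        · simpa [hj] using hy.1 j
      · intro i
        rw [sum_add_single]
        rw [hy.2 i]
        simp only [hb']
        push_cast
        ring
    -- x' = x - m e_l is optimal for b'
    set x' : Fin n → ℝ := fun j => x j + if j = l then (-(m:ℝ)) else 0 with hx'
    have hx'l : x' l = lam - m := by simp [hx', hxl]; ring
    have hx'feas : feas A (fun i => ((b' i : ℤ) : ℝ)) x' := by
      constructor
      · intro j
        by_cases hj : j = l
        · subst hj; simp only [hx', eq_self_iff_true, if_true]
          have : (m:ℝ) ≤ x j := by rw [hxl]; linarith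
          linarith
        · simpa [hx', hj] using hx.1.1 j
      · intro i
        simp only [hx']
        rw [sum_add_single]
        rw [hx.1.2 i]
        simp only [hb']
        push_cast
        ring
    have hx'opt : lpOpt A c (fun i => ((b' i : ℤ) : ℝ)) x' := by
      refine ⟨hx'feas, ?_⟩
      intro y hy
      have hyl := lift_feas y hy
      have h2 := hx.2 _ hyl
      rw [sum_add_single] at h2
      simp only [hx']
      rw [sum_add_single]
      linarith
    -- apply hlift
    obtain ⟨z, hzopt, hzl⟩ := hlift b' ⟨x', hx'feas⟩ l
      ⟨x', hx'opt, by rw [hx'l]; linarith⟩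
    -- costs of z and x' agree
    have hcost : ∑ j, c j * z j = ∑ j, c j * x' j :=
      le_antisymm (hzopt.2 _ hx'feas) (hx'opt.2 _ hzopt.1)
    -- w = z + m e_l is optimal for b with w l ≥ 1 + m > lam
    set w : Fin n → ℝ := fun j => z j + if j = l then (m:ℝ) else 0 with hw
    have hwfeas : feas A (fun i => (b i : ℝ)) w := lift_feas z hzopt.1
    have hwcost : ∑ j, c j * w j = ∑ j, c j * x j := by
      simp only [hw]
      rw [sum_add_single, hcost]
      simp only [hx']
      rw [sum_add_single]
      ring
    have hwopt : lpOpt A c (fun i => (b i : ℝ)) w := by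
      refine ⟨hwfeas, ?_⟩
      intro y hy
      rw [hwcost]
      exact hx.2 y hy
    have hwl : w l = z l + m := by simp [hw]
    have := hub ⟨w, hwopt, rfl⟩
    rw [hwl] at this
    linarith
end

section
/- Let A ∈ Z^{d×n} and let U ⊆ [n] with |U| = d index linearly independent columns such that A_U is an integer matrix whose determinant is not ±1. Then there exists a standard unit vector e_j ∈ Z^d that is a non-integer rational combination of the columns of A_U, and consequently the vector z := Σ_{i∈U} {x_i} a_i (the fractional parts of the coefficients in e_j = Σ x_i a_i) is a nonzero integer vector in cone(A_U) whose coefficient vector in the basis A_U has all entries in [0,1) with at least one entry in (0,1). -/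
/-!
If the real inverse of a nonsingular integer matrix `B` were integral, `B` would be invertible
over `ℤ` and `det B = ±1`. So some column `x = B⁻¹ eⱼ` has a non-integral entry. Replacing
`x` by its fractional part `{x} = x - ⌊x⌋` changes `B x = eⱼ` by the integer vector `B ⌊x⌋`, so
`z = B {x}` is integral, and it is nonzero because `B` is injective and `{x} ≠ 0`.
-/

open Matrix

namespace Matrix

variable {n : Type*} [Fintype n]

theorem isUnit_det_of_map_eq_nonsing_inv [DecidableEq n] {R S : Type*} [CommRing R] [CommRing S]
    {f : R →+* S} (hf : Function.Injective f) {A C : Matrix n n R} (hA : IsUnit (A.map f).det)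
    (hC : C.map f = (A.map f)⁻¹) : IsUnit A.det := by
  refine isUnit_det_of_right_inverse (B := C) (map_injective hf ?_)
  change (A * C).map f = (1 : Matrix n n R).map f
  rw [Matrix.map_mul, hC, mul_nonsing_inv _ hA, Matrix.map_one _ f.map_zero f.map_one]

section IntCast

variable [DecidableEq n] {K : Type*} [Field K] [CharZero K] {B : Matrix n n ℤ}

theorem isUnit_map_intCast (hB : B.det ≠ 0) : IsUnit (B.map (Int.cast : ℤ → K)) := by
  rw [isUnit_iff_isUnit_det, show (B.map Int.cast).det = (B.det : K) from
    ((Int.castRingHom K).map_det B).symm]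
  exact isUnit_iff_ne_zero.2 (Int.cast_ne_zero.2 hB)

theorem exists_nonsing_inv_map_intCast_apply_ne_intCast (hB : B.det ≠ 0) (hB' : ¬IsUnit B.det) :
    ∃ k j, ¬∃ m : ℤ, (B.map (Int.cast : ℤ → K))⁻¹ k j = m := by
  by_contra! hint
  choose C hC using hint
  refine hB' (isUnit_det_of_map_eq_nonsing_inv (f := Int.castRingHom K) (C := of C)
    Int.cast_injective ((isUnit_iff_isUnit_det _).1 (isUnit_map_intCast hB)) ?_)
  ext k j
  exact (hC k j).symm

end IntCast

theorem map_intCast_mulVec_fract {m K : Type*} [Field K] [LinearOrder K] [IsStrictOrderedRing K]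
    [FloorRing K] (B : Matrix m n ℤ) (x : n → K) :
    B.map Int.cast *ᵥ (fun k => Int.fract (x k)) =
      B.map Int.cast *ᵥ x - fun i => ((B *ᵥ fun k => ⌊x k⌋) i : K) := by
  rw [show (fun k => Int.fract (x k)) = x - fun k => (⌊x k⌋ : K) from rfl, mulVec_sub]
  congr
  ext i
  exact ((Int.castRingHom K).map_mulVec B _ i).symm

end Matrix

theorem stmt13 {d : ℕ} (B : Matrix (Fin d) (Fin d) ℤ)
    (hnz : B.det ≠ 0) (hdet : B.det ≠ 1 ∧ B.det ≠ -1) :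
    ∃ j : Fin d, ∃ x : Fin d → ℝ,
      -- e_j is a combination of the columns of B with coefficients x
      (∀ i, ∑ k, (B i k : ℝ) * x k = if i = j then 1 else 0) ∧
      -- the combination is non-integer
      (∃ k, ¬ ∃ m : ℤ, x k = (m : ℝ)) ∧
      -- z = Σ {x_k} b_k is a nonzero integer vector
      (∃ z : Fin d → ℤ, (∀ i, (z i : ℝ) = ∑ k, Int.fract (x k) * (B i k : ℝ)) ∧ z ≠ 0) ∧
      -- the coefficients of z in the basis B lie in [0,1), one of them in (0,1)
      (∀ k, 0 ≤ Int.fract (x k) ∧ Int.fract (x k) < 1) ∧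
      (∃ k, 0 < Int.fract (x k)) := by
  set A := B.map (Int.cast : ℤ → ℝ)
  have hA : IsUnit A := isUnit_map_intCast hnz
  obtain ⟨k₀, j, hk₀⟩ := exists_nonsing_inv_map_intCast_apply_ne_intCast (K := ℝ) hnz
    (by rwa [Int.isUnit_iff, not_or])
  set x := A⁻¹ *ᵥ Pi.single j 1
  have hx : A *ᵥ x = Pi.single j 1 := by
    rw [mulVec_mulVec, mul_nonsing_inv _ ((isUnit_iff_isUnit_det A).1 hA), one_mulVec]
  have hx₀ : ¬∃ m : ℤ, x k₀ = m := by simpa [x] using hk₀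
  have hfract : 0 < Int.fract (x k₀) := Int.fract_pos.2 fun h => hx₀ ⟨_, h⟩
  set z : Fin d → ℤ := Pi.single j 1 - B *ᵥ fun k => ⌊x k⌋
  have hz : A *ᵥ (fun k => Int.fract (x k)) = fun i => (z i : ℝ) := by
    rw [map_intCast_mulVec_fract, hx]
    ext i
    simp [z, Pi.single_apply]
  refine ⟨j, x, fun i => ?_, ⟨k₀, hx₀⟩, ⟨z, fun i => ?_, fun hz₀ => ?_⟩,
    fun k => ⟨Int.fract_nonneg _, Int.fract_lt_one _⟩, ⟨k₀, hfract⟩⟩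
  · exact (congrFun hx i).trans (Pi.single_apply j 1 i)
  · rw [← congrFun hz i, mulVec, dotProduct]
    exact Finset.sum_congr rfl fun k _ => mul_comm (A i k) (Int.fract (x k))
  · have : (fun k => Int.fract (x k)) = 0 :=
      mulVec_injective_iff_isUnit.2 hA <| by
        rw [hz, hz₀, mulVec_zero]
        exact funext fun _ => Int.cast_zero
    exact hfract.ne' (congrFun this k₀)
end
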